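/- arXiv:2305.19701 — 3 statements merged into one kernel-verified Lean document; each statement's English description precedes it below -/
import Mathlib

section
/- Let p: ℝ → ℝ be smooth and 2π-periodic with p'' + p > 0, let γ(α) := p'(α)e_α − p(α)Je_α, let g: [0,S] → [0,2π] be a smooth increasing bijection with smooth inverse, and set h(α) := g'(g⁻¹(α)) and L(s₁,s₂) := ω(γ(g(s₁)), γ(g(s₂))). Then ∫∫_{[0,S]²} [L₁₁(s₁,s₂) + L₂₂(s₁,s₂)] · L₁₂(s₁,s₂) ds₁ ds₂ = −2 A(D) ∫₀^{2π} (p''(α) + p(α))² h(α)² dα, where A(D) := ½ ∫₀^{2π} (p(α) + p''(α)) p(α) dα. -/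
open Real Set MeasureTheory intervalIntegral

/-- The standard area form on ℝ². -/
noncomputable def om (u v : ℝ × ℝ) : ℝ := u.1 * v.2 - v.1 * u.2

/-- The unit vector forming angle α with (0,1). -/
noncomputable def eVec (α : ℝ) : ℝ × ℝ := (-Real.sin α, Real.cos α)

/-- Rotation by π/2 in the positive sense. -/
def Jrot (v : ℝ × ℝ) : ℝ × ℝ := (-v.2, v.1)



noncomputable def qq (p : ℝ → ℝ) : ℝ → ℝ := fun α => deriv (deriv p) α + p α
noncomputable def XX (p : ℝ → ℝ) : ℝ → ℝ := fun α => -deriv p α * Real.sin α + p α * Real.cos α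
noncomputable def YY (p : ℝ → ℝ) : ℝ → ℝ := fun α => deriv p α * Real.cos α + p α * Real.sin α
noncomputable def Wf (p g : ℝ → ℝ) : ℝ → ℝ :=
  fun s => deriv (deriv g) s * qq p (g s)
    + deriv g s ^ 2 * (deriv (deriv (deriv p)) (g s) + deriv p (g s))

lemma hp_inf {p : ℝ → ℝ} (hp : ContDiff ℝ (⊤ : ℕ∞) p) : ContDiff ℝ (⊤:ℕ∞) p := hp.of_le (by simp)
lemma hp1_smooth {p : ℝ → ℝ} (hp : ContDiff ℝ (⊤ : ℕ∞) p) : ContDiff ℝ (⊤:ℕ∞) (deriv p) :=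
  (contDiff_infty_iff_deriv.mp (hp_inf hp)).2
lemma hp2_smooth {p : ℝ → ℝ} (hp : ContDiff ℝ (⊤ : ℕ∞) p) : ContDiff ℝ (⊤:ℕ∞) (deriv (deriv p)) :=
  (contDiff_infty_iff_deriv.mp (hp1_smooth hp)).2
lemma hp3_smooth {p : ℝ → ℝ} (hp : ContDiff ℝ (⊤ : ℕ∞) p) :
    ContDiff ℝ (⊤:ℕ∞) (deriv (deriv (deriv p))) :=
  (contDiff_infty_iff_deriv.mp (hp2_smooth hp)).2

lemma cont_q {p : ℝ → ℝ} (hp : ContDiff ℝ (⊤ : ℕ∞) p) : Continuous (qq p) :=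
  ((hp2_smooth hp).continuous).add (hp_inf hp).continuous
lemma cont_X {p : ℝ → ℝ} (hp : ContDiff ℝ (⊤ : ℕ∞) p) : Continuous (XX p) :=
  (((hp1_smooth hp).continuous.neg).mul Real.continuous_sin).add
    ((hp_inf hp).continuous.mul Real.continuous_cos)
lemma cont_Y {p : ℝ → ℝ} (hp : ContDiff ℝ (⊤ : ℕ∞) p) : Continuous (YY p) :=
  ((hp1_smooth hp).continuous.mul Real.continuous_cos).add
    ((hp_inf hp).continuous.mul Real.continuous_sin)
lemma cont_q1 {p : ℝ → ℝ} (hp : ContDiff ℝ (⊤ : ℕ∞) p) :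
    Continuous (fun α => deriv (deriv (deriv p)) α + deriv p α) :=
  ((hp3_smooth hp).continuous).add (hp1_smooth hp).continuous

lemma hp1_diff {p : ℝ → ℝ} (hp : ContDiff ℝ (⊤ : ℕ∞) p) : Differentiable ℝ (deriv p) :=
  (hp1_smooth hp).differentiable (by simp)
lemma hp2_diff {p : ℝ → ℝ} (hp : ContDiff ℝ (⊤ : ℕ∞) p) : Differentiable ℝ (deriv (deriv p)) :=
  (hp2_smooth hp).differentiable (by simp)

lemma hq_deriv {p : ℝ → ℝ} (hp : ContDiff ℝ (⊤ : ℕ∞) p) (α : ℝ) :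
    HasDerivAt (qq p) (deriv (deriv (deriv p)) α + deriv p α) α :=
  ((hp2_diff hp α).hasDerivAt).add
    ((hp.differentiable (by simp) α).hasDerivAt)

lemma hX_deriv {p : ℝ → ℝ} (hp : ContDiff ℝ (⊤ : ℕ∞) p) (α : ℝ) :
    HasDerivAt (XX p) (-(qq p α * Real.sin α)) α := by
  have h1 : HasDerivAt (fun t => -deriv p t * Real.sin t)
      (-deriv (deriv p) α * Real.sin α + -deriv p α * Real.cos α) α :=
    ((hp1_diff hp α).hasDerivAt.neg).mul (Real.hasDerivAt_sin α)
  have h2 : HasDerivAt (fun t => p t * Real.cos t)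
      (deriv p α * Real.cos α + p α * -Real.sin α) α :=
    ((hp.differentiable (by simp) α).hasDerivAt).mul (Real.hasDerivAt_cos α)
  have h := h1.add h2
  exact h.congr_deriv (by simp only [qq]; ring)

lemma hY_deriv {p : ℝ → ℝ} (hp : ContDiff ℝ (⊤ : ℕ∞) p) (α : ℝ) :
    HasDerivAt (YY p) (qq p α * Real.cos α) α := by
  have h1 : HasDerivAt (fun t => deriv p t * Real.cos t)
      (deriv (deriv p) α * Real.cos α + deriv p α * -Real.sin α) α :=
    ((hp1_diff hp α).hasDerivAt).mul (Real.hasDerivAt_cos α)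
  have h2 : HasDerivAt (fun t => p t * Real.sin t)
      (deriv p α * Real.sin α + p α * Real.cos α) α :=
    ((hp.differentiable (by simp) α).hasDerivAt).mul (Real.hasDerivAt_sin α)
  have h := h1.add h2
  exact h.congr_deriv (by simp only [qq]; ring)

lemma om_eq (p : ℝ → ℝ) (γ : ℝ → ℝ × ℝ)
    (hγ : ∀ α, γ α = deriv p α • eVec α - p α • Jrot (eVec α)) (a b : ℝ) :
    om (γ a) (γ b) = XX p a * YY p b - XX p b * YY p a := by
  simp only [hγ, eVec, Jrot, om, Prod.smul_mk, smul_eq_mul, Prod.mk_sub_mk, XX, YY]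
  ring

section Lderivs
variable {p g : ℝ → ℝ} {γ : ℝ → ℝ × ℝ}

lemma L1_deriv (hp : ContDiff ℝ (⊤ : ℕ∞) p) (hg : ContDiff ℝ (⊤ : ℕ∞) g)
    (hγ : ∀ α, γ α = deriv p α • eVec α - p α • Jrot (eVec α)) (c v : ℝ) :
    deriv (fun w => om (γ c) (γ (g w))) v
      = deriv g v * qq p (g v) * (XX p c * Real.cos (g v) + YY p c * Real.sin (g v)) := by
  have hfun : (fun w => om (γ c) (γ (g w)))
      = fun w => XX p c * YY p (g w) - XX p (g w) * YY p c :=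
    funext fun w => om_eq p γ hγ c (g w)
  rw [hfun]
  have hgv : HasDerivAt g (deriv g v) v := (hg.differentiable (by simp) v).hasDerivAt
  have hY : HasDerivAt (fun w => YY p (g w)) (qq p (g v) * Real.cos (g v) * deriv g v) v :=
    (hY_deriv hp (g v)).comp v hgv
  have hX : HasDerivAt (fun w => XX p (g w)) (-(qq p (g v) * Real.sin (g v)) * deriv g v) v :=
    (hX_deriv hp (g v)).comp v hgv
  erw [((hY.const_mul (XX p c)).sub (hX.mul_const (YY p c))).deriv]
  ring

lemma L1_deriv' (hp : ContDiff ℝ (⊤ : ℕ∞) p) (hg : ContDiff ℝ (⊤ : ℕ∞) g)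
    (hγ : ∀ α, γ α = deriv p α • eVec α - p α • Jrot (eVec α)) (c v : ℝ) :
    deriv (fun w => om (γ (g w)) (γ c)) v
      = -(deriv g v * qq p (g v) * (XX p c * Real.cos (g v) + YY p c * Real.sin (g v))) := by
  have hfun : (fun w => om (γ (g w)) (γ c))
      = fun w => XX p (g w) * YY p c - XX p c * YY p (g w) :=
    funext fun w => om_eq p γ hγ (g w) c
  rw [hfun]
  have hgv : HasDerivAt g (deriv g v) v := (hg.differentiable (by simp) v).hasDerivAt
  have hY : HasDerivAt (fun w => YY p (g w)) (qq p (g v) * Real.cos (g v) * deriv g v) v :=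
    (hY_deriv hp (g v)).comp v hgv
  have hX : HasDerivAt (fun w => XX p (g w)) (-(qq p (g v) * Real.sin (g v)) * deriv g v) v :=
    (hX_deriv hp (g v)).comp v hgv
  erw [((hX.mul_const (YY p c)).sub (hY.const_mul (XX p c))).deriv]
  ring

lemma L22_eq (hp : ContDiff ℝ (⊤ : ℕ∞) p) (hg : ContDiff ℝ (⊤ : ℕ∞) g)
    (hγ : ∀ α, γ α = deriv p α • eVec α - p α • Jrot (eVec α)) (s₁ s₂ : ℝ) :
    deriv (deriv (fun v => om (γ (g s₁)) (γ (g v)))) s₂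
      = Wf p g s₂ * (XX p (g s₁) * Real.cos (g s₂) + YY p (g s₁) * Real.sin (g s₂))
        + deriv g s₂ ^ 2 * qq p (g s₂)
            * (YY p (g s₁) * Real.cos (g s₂) - XX p (g s₁) * Real.sin (g s₂)) := by
  have h1 : deriv (fun v => om (γ (g s₁)) (γ (g v)))
      = fun v => deriv g v * qq p (g v)
          * (XX p (g s₁) * Real.cos (g v) + YY p (g s₁) * Real.sin (g v)) :=
    funext fun v => L1_deriv hp hg hγ (g s₁) v
  rw [h1]
  have hgv : HasDerivAt g (deriv g s₂) s₂ := (hg.differentiable (by simp) s₂).hasDerivAt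
  have hdg : HasDerivAt (deriv g) (deriv (deriv g) s₂) s₂ :=
    ((hp1_diff hg) s₂).hasDerivAt
  have hqg : HasDerivAt (fun v => qq p (g v))
      ((deriv (deriv (deriv p)) (g s₂) + deriv p (g s₂)) * deriv g s₂) s₂ :=
    (hq_deriv hp (g s₂)).comp s₂ hgv
  have hcg : HasDerivAt (fun v => Real.cos (g v)) (-Real.sin (g s₂) * deriv g s₂) s₂ :=
    (Real.hasDerivAt_cos (g s₂)).comp s₂ hgv
  have hsg : HasDerivAt (fun v => Real.sin (g v)) (Real.cos (g s₂) * deriv g s₂) s₂ :=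
    (Real.hasDerivAt_sin (g s₂)).comp s₂ hgv
  have hB : HasDerivAt
      (fun v => XX p (g s₁) * Real.cos (g v) + YY p (g s₁) * Real.sin (g v))
      (XX p (g s₁) * (-Real.sin (g s₂) * deriv g s₂)
        + YY p (g s₁) * (Real.cos (g s₂) * deriv g s₂)) s₂ :=
    (hcg.const_mul (XX p (g s₁))).add (hsg.const_mul (YY p (g s₁)))
  erw [((hdg.mul hqg).mul hB).deriv]
  simp only [Wf, Pi.mul_apply]; ring

lemma L11_eq (hp : ContDiff ℝ (⊤ : ℕ∞) p) (hg : ContDiff ℝ (⊤ : ℕ∞) g)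
    (hγ : ∀ α, γ α = deriv p α • eVec α - p α • Jrot (eVec α)) (c s₁ : ℝ) :
    deriv (deriv (fun u => om (γ (g u)) (γ c))) s₁
      = -(Wf p g s₁ * (XX p c * Real.cos (g s₁) + YY p c * Real.sin (g s₁))
        + deriv g s₁ ^ 2 * qq p (g s₁)
            * (YY p c * Real.cos (g s₁) - XX p c * Real.sin (g s₁))) := by
  have h1 : deriv (fun u => om (γ (g u)) (γ c))
      = fun v => -(deriv g v * qq p (g v)
          * (XX p c * Real.cos (g v) + YY p c * Real.sin (g v))) :=
    funext fun v => L1_deriv' hp hg hγ c v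
  rw [h1]
  have hgv : HasDerivAt g (deriv g s₁) s₁ := (hg.differentiable (by simp) s₁).hasDerivAt
  have hdg : HasDerivAt (deriv g) (deriv (deriv g) s₁) s₁ :=
    ((hp1_diff hg) s₁).hasDerivAt
  have hqg : HasDerivAt (fun v => qq p (g v))
      ((deriv (deriv (deriv p)) (g s₁) + deriv p (g s₁)) * deriv g s₁) s₁ :=
    (hq_deriv hp (g s₁)).comp s₁ hgv
  have hcg : HasDerivAt (fun v => Real.cos (g v)) (-Real.sin (g s₁) * deriv g s₁) s₁ :=
    (Real.hasDerivAt_cos (g s₁)).comp s₁ hgv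
  have hsg : HasDerivAt (fun v => Real.sin (g v)) (Real.cos (g s₁) * deriv g s₁) s₁ :=
    (Real.hasDerivAt_sin (g s₁)).comp s₁ hgv
  have hB : HasDerivAt
      (fun v => XX p c * Real.cos (g v) + YY p c * Real.sin (g v))
      (XX p c * (-Real.sin (g s₁) * deriv g s₁)
        + YY p c * (Real.cos (g s₁) * deriv g s₁)) s₁ :=
    (hcg.const_mul (XX p c)).add (hsg.const_mul (YY p c))
  erw [(((hdg.mul hqg).mul hB).neg).deriv]
  simp only [Wf, Pi.mul_apply]; ring

lemma L12_eq (hp : ContDiff ℝ (⊤ : ℕ∞) p) (hg : ContDiff ℝ (⊤ : ℕ∞) g)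
    (hγ : ∀ α, γ α = deriv p α • eVec α - p α • Jrot (eVec α)) (s₁ s₂ : ℝ) :
    deriv (fun u => deriv (fun v => om (γ (g u)) (γ (g v))) s₂) s₁
      = deriv g s₁ * deriv g s₂ * qq p (g s₁) * qq p (g s₂)
          * (Real.sin (g s₂) * Real.cos (g s₁) - Real.cos (g s₂) * Real.sin (g s₁)) := by
  have h1 : (fun u => deriv (fun v => om (γ (g u)) (γ (g v))) s₂)
      = fun u => deriv g s₂ * qq p (g s₂)
          * (XX p (g u) * Real.cos (g s₂) + YY p (g u) * Real.sin (g s₂)) :=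
    funext fun u => L1_deriv hp hg hγ (g u) s₂
  rw [h1]
  have hgv : HasDerivAt g (deriv g s₁) s₁ := (hg.differentiable (by simp) s₁).hasDerivAt
  have hY : HasDerivAt (fun w => YY p (g w)) (qq p (g s₁) * Real.cos (g s₁) * deriv g s₁) s₁ :=
    (hY_deriv hp (g s₁)).comp s₁ hgv
  have hX : HasDerivAt (fun w => XX p (g w)) (-(qq p (g s₁) * Real.sin (g s₁)) * deriv g s₁) s₁ :=
    (hX_deriv hp (g s₁)).comp s₁ hgv
  erw [(((hX.mul_const (Real.cos (g s₂))).add (hY.mul_const (Real.sin (g s₂)))).const_mul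
    (deriv g s₂ * qq p (g s₂))).deriv]
  ring

end Lderivs

lemma deriv_per_eval {f : ℝ → ℝ} (hf : ∀ α, f (α + 2*π) = f α) :
    deriv f (2*π) = deriv f 0 := by
  have h0 : (fun x => f (x + 2*π)) = f := funext fun x => hf x
  have h := deriv_comp_add_const f (2*π) 0
  rw [h0, zero_add] at h
  exact h.symm

lemma XX_per {p : ℝ → ℝ} (hper : ∀ α, p (α + 2*π) = p α) : XX p (2*π) = XX p 0 := by
  have hp2 : p (2*π) = p 0 := by simpa using hper 0
  simp [XX, Real.sin_two_pi, Real.cos_two_pi, hp2]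

lemma YY_per {p : ℝ → ℝ} (hper : ∀ α, p (α + 2*π) = p α) : YY p (2*π) = YY p 0 := by
  have hp1 : deriv p (2*π) = deriv p 0 := deriv_per_eval hper
  simp [YY, Real.sin_two_pi, Real.cos_two_pi, hp1]

lemma intXs {p : ℝ → ℝ} (hp : ContDiff ℝ (⊤ : ℕ∞) p) (hper : ∀ α, p (α + 2*π) = p α) :
    ∫ t in (0:ℝ)..(2*π), qq p t * XX p t * Real.sin t = 0 := by
  have hd : ∀ t ∈ uIcc (0:ℝ) (2*π),
      HasDerivAt (fun t => -(XX p t * XX p t) / 2) (qq p t * XX p t * Real.sin t) t := by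
    intro t _
    have h := (((hX_deriv hp t).mul (hX_deriv hp t)).neg).div_const 2
    exact h.congr_deriv (by ring)
  rw [integral_eq_sub_of_hasDerivAt hd
    ((((cont_q hp).mul (cont_X hp)).mul Real.continuous_sin).intervalIntegrable _ _)]
  rw [XX_per hper]; ring

lemma intYc {p : ℝ → ℝ} (hp : ContDiff ℝ (⊤ : ℕ∞) p) (hper : ∀ α, p (α + 2*π) = p α) :
    ∫ t in (0:ℝ)..(2*π), qq p t * YY p t * Real.cos t = 0 := by
  have hd : ∀ t ∈ uIcc (0:ℝ) (2*π),
      HasDerivAt (fun t => YY p t * YY p t / 2) (qq p t * YY p t * Real.cos t) t := by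
    intro t _
    have h := ((hY_deriv hp t).mul (hY_deriv hp t)).div_const 2
    exact h.congr_deriv (by ring)
  rw [integral_eq_sub_of_hasDerivAt hd
    ((((cont_q hp).mul (cont_Y hp)).mul Real.continuous_cos).intervalIntegrable _ _)]
  rw [YY_per hper]; ring

lemma intXcYs {p : ℝ → ℝ} (hp : ContDiff ℝ (⊤ : ℕ∞) p) (hper : ∀ α, p (α + 2*π) = p α) :
    ∫ t in (0:ℝ)..(2*π),
      (qq p t * XX p t * Real.cos t - qq p t * YY p t * Real.sin t) = 0 := by
  have hd : ∀ t ∈ uIcc (0:ℝ) (2*π),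
      HasDerivAt (fun t => XX p t * YY p t)
        (qq p t * XX p t * Real.cos t - qq p t * YY p t * Real.sin t) t := by
    intro t _
    have h := (hX_deriv hp t).mul (hY_deriv hp t)
    exact h.congr_deriv (by ring)
  rw [integral_eq_sub_of_hasDerivAt hd
    (((((cont_q hp).mul (cont_X hp)).mul Real.continuous_cos).sub
      (((cont_q hp).mul (cont_Y hp)).mul Real.continuous_sin)).intervalIntegrable _ _)]
  rw [XX_per hper, YY_per hper]; ring

lemma intXcAddYs {p : ℝ → ℝ} :
    ∫ t in (0:ℝ)..(2*π),
      (qq p t * XX p t * Real.cos t + qq p t * YY p t * Real.sin t)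
      = ∫ t in (0:ℝ)..(2*π), (p t + deriv (deriv p) t) * p t := by
  apply intervalIntegral.integral_congr
  intro t _
  have hsc := Real.sin_sq_add_cos_sq t
  simp only [qq, XX, YY]
  linear_combination ((deriv (deriv p) t + p t) * p t) * hsc

lemma intXc {p : ℝ → ℝ} (hp : ContDiff ℝ (⊤ : ℕ∞) p) (hper : ∀ α, p (α + 2*π) = p α) :
    ∫ t in (0:ℝ)..(2*π), qq p t * XX p t * Real.cos t
      = (1/2) * ∫ t in (0:ℝ)..(2*π), (p t + deriv (deriv p) t) * p t := by
  have i1 : IntervalIntegrable (fun t => qq p t * XX p t * Real.cos t) volume 0 (2*π) :=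
    (((cont_q hp).mul (cont_X hp)).mul Real.continuous_cos).intervalIntegrable _ _
  have i2 : IntervalIntegrable (fun t => qq p t * YY p t * Real.sin t) volume 0 (2*π) :=
    (((cont_q hp).mul (cont_Y hp)).mul Real.continuous_sin).intervalIntegrable _ _
  have h1 := intXcYs hp hper
  have h2 := intXcAddYs (p := p)
  rw [intervalIntegral.integral_sub i1 i2] at h1
  rw [intervalIntegral.integral_add i1 i2] at h2
  linarith

lemma intYs {p : ℝ → ℝ} (hp : ContDiff ℝ (⊤ : ℕ∞) p) (hper : ∀ α, p (α + 2*π) = p α) :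
    ∫ t in (0:ℝ)..(2*π), qq p t * YY p t * Real.sin t
      = (1/2) * ∫ t in (0:ℝ)..(2*π), (p t + deriv (deriv p) t) * p t := by
  have i1 : IntervalIntegrable (fun t => qq p t * XX p t * Real.cos t) volume 0 (2*π) :=
    (((cont_q hp).mul (cont_X hp)).mul Real.continuous_cos).intervalIntegrable _ _
  have i2 : IntervalIntegrable (fun t => qq p t * YY p t * Real.sin t) volume 0 (2*π) :=
    (((cont_q hp).mul (cont_Y hp)).mul Real.continuous_sin).intervalIntegrable _ _
  have h1 := intXcYs hp hper
  have h2 := intXcAddYs (p := p)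
  rw [intervalIntegral.integral_sub i1 i2] at h1
  rw [intervalIntegral.integral_add i1 i2] at h2
  linarith

lemma subst_int {g : ℝ → ℝ} (hg : ContDiff ℝ (⊤ : ℕ∞) g) (S : ℝ) {ψ : ℝ → ℝ} (hψ : Continuous ψ) :
    ∫ s in (0:ℝ)..S, deriv g s * ψ (g s) = ∫ t in (g 0)..(g S), ψ t := by
  have h := intervalIntegral.integral_comp_smul_deriv (a := 0) (b := S)
    (f := g) (f' := deriv g) (g := ψ)
    (fun x _ => (hg.differentiable (by simp) x).hasDerivAt)
    ((hp1_smooth hg).continuous.continuousOn) hψ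
  simpa [smul_eq_mul, Function.comp] using h

noncomputable def kXs (p g : ℝ → ℝ) : ℝ → ℝ :=
  fun s => deriv g s * (qq p (g s) * XX p (g s) * Real.sin (g s))
noncomputable def kXc (p g : ℝ → ℝ) : ℝ → ℝ :=
  fun s => deriv g s * (qq p (g s) * XX p (g s) * Real.cos (g s))
noncomputable def kYs (p g : ℝ → ℝ) : ℝ → ℝ :=
  fun s => deriv g s * (qq p (g s) * YY p (g s) * Real.sin (g s))
noncomputable def kYc (p g : ℝ → ℝ) : ℝ → ℝ :=
  fun s => deriv g s * (qq p (g s) * YY p (g s) * Real.cos (g s))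
noncomputable def kW1 (p g : ℝ → ℝ) : ℝ → ℝ :=
  fun s => deriv g s * (Wf p g s * qq p (g s) * (Real.cos (g s) * Real.sin (g s)))
noncomputable def kW2 (p g : ℝ → ℝ) : ℝ → ℝ :=
  fun s => deriv g s * (Wf p g s * qq p (g s) * Real.cos (g s) ^ 2)
noncomputable def kW3 (p g : ℝ → ℝ) : ℝ → ℝ :=
  fun s => deriv g s * (Wf p g s * qq p (g s) * Real.sin (g s) ^ 2)
noncomputable def kQ1 (p g : ℝ → ℝ) : ℝ → ℝ :=
  fun s => deriv g s ^ 3 * (qq p (g s) ^ 2 * (Real.cos (g s) * Real.sin (g s)))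
noncomputable def kQ2 (p g : ℝ → ℝ) : ℝ → ℝ :=
  fun s => deriv g s ^ 3 * (qq p (g s) ^ 2 * Real.cos (g s) ^ 2)
noncomputable def kQ3 (p g : ℝ → ℝ) : ℝ → ℝ :=
  fun s => deriv g s ^ 3 * (qq p (g s) ^ 2 * Real.sin (g s) ^ 2)
noncomputable def kF5 (p g : ℝ → ℝ) : ℝ → ℝ :=
  fun s => deriv g s ^ 3 * qq p (g s) ^ 2

section conts
variable {p g : ℝ → ℝ} (hp : ContDiff ℝ (⊤ : ℕ∞) p) (hg : ContDiff ℝ (⊤ : ℕ∞) g)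

lemma cont_W (hp : ContDiff ℝ (⊤ : ℕ∞) p) (hg : ContDiff ℝ (⊤ : ℕ∞) g) : Continuous (Wf p g) := by
  have hgc : Continuous g := hg.continuous
  exact ((hp2_smooth hg).continuous.mul ((cont_q hp).comp hgc)).add
    ((((hp1_smooth hg).continuous).pow 2).mul ((cont_q1 hp).comp hgc))

lemma cont_kXs (hp : ContDiff ℝ (⊤ : ℕ∞) p) (hg : ContDiff ℝ (⊤ : ℕ∞) g) : Continuous (kXs p g) := by
  have hgc : Continuous g := hg.continuous
  exact (hp1_smooth hg).continuous.mul ((((cont_q hp).comp hgc).mul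
    ((cont_X hp).comp hgc)).mul (Real.continuous_sin.comp hgc))
lemma cont_kXc (hp : ContDiff ℝ (⊤ : ℕ∞) p) (hg : ContDiff ℝ (⊤ : ℕ∞) g) : Continuous (kXc p g) := by
  have hgc : Continuous g := hg.continuous
  exact (hp1_smooth hg).continuous.mul ((((cont_q hp).comp hgc).mul
    ((cont_X hp).comp hgc)).mul (Real.continuous_cos.comp hgc))
lemma cont_kYs (hp : ContDiff ℝ (⊤ : ℕ∞) p) (hg : ContDiff ℝ (⊤ : ℕ∞) g) : Continuous (kYs p g) := by
  have hgc : Continuous g := hg.continuous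
  exact (hp1_smooth hg).continuous.mul ((((cont_q hp).comp hgc).mul
    ((cont_Y hp).comp hgc)).mul (Real.continuous_sin.comp hgc))
lemma cont_kYc (hp : ContDiff ℝ (⊤ : ℕ∞) p) (hg : ContDiff ℝ (⊤ : ℕ∞) g) : Continuous (kYc p g) := by
  have hgc : Continuous g := hg.continuous
  exact (hp1_smooth hg).continuous.mul ((((cont_q hp).comp hgc).mul
    ((cont_Y hp).comp hgc)).mul (Real.continuous_cos.comp hgc))
lemma cont_kW1 (hp : ContDiff ℝ (⊤ : ℕ∞) p) (hg : ContDiff ℝ (⊤ : ℕ∞) g) : Continuous (kW1 p g) := by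
  have hgc : Continuous g := hg.continuous
  exact (hp1_smooth hg).continuous.mul (((cont_W hp hg).mul ((cont_q hp).comp hgc)).mul
    ((Real.continuous_cos.comp hgc).mul (Real.continuous_sin.comp hgc)))
lemma cont_kW2 (hp : ContDiff ℝ (⊤ : ℕ∞) p) (hg : ContDiff ℝ (⊤ : ℕ∞) g) : Continuous (kW2 p g) := by
  have hgc : Continuous g := hg.continuous
  exact (hp1_smooth hg).continuous.mul (((cont_W hp hg).mul ((cont_q hp).comp hgc)).mul
    ((Real.continuous_cos.comp hgc).pow 2))
lemma cont_kW3 (hp : ContDiff ℝ (⊤ : ℕ∞) p) (hg : ContDiff ℝ (⊤ : ℕ∞) g) : Continuous (kW3 p g) := by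
  have hgc : Continuous g := hg.continuous
  exact (hp1_smooth hg).continuous.mul (((cont_W hp hg).mul ((cont_q hp).comp hgc)).mul
    ((Real.continuous_sin.comp hgc).pow 2))
lemma cont_kQ1 (hp : ContDiff ℝ (⊤ : ℕ∞) p) (hg : ContDiff ℝ (⊤ : ℕ∞) g) : Continuous (kQ1 p g) := by
  have hgc : Continuous g := hg.continuous
  exact ((hp1_smooth hg).continuous.pow 3).mul ((((cont_q hp).comp hgc).pow 2).mul
    ((Real.continuous_cos.comp hgc).mul (Real.continuous_sin.comp hgc)))
lemma cont_kQ2 (hp : ContDiff ℝ (⊤ : ℕ∞) p) (hg : ContDiff ℝ (⊤ : ℕ∞) g) : Continuous (kQ2 p g) := by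
  have hgc : Continuous g := hg.continuous
  exact ((hp1_smooth hg).continuous.pow 3).mul ((((cont_q hp).comp hgc).pow 2).mul
    ((Real.continuous_cos.comp hgc).pow 2))
lemma cont_kQ3 (hp : ContDiff ℝ (⊤ : ℕ∞) p) (hg : ContDiff ℝ (⊤ : ℕ∞) g) : Continuous (kQ3 p g) := by
  have hgc : Continuous g := hg.continuous
  exact ((hp1_smooth hg).continuous.pow 3).mul ((((cont_q hp).comp hgc).pow 2).mul
    ((Real.continuous_sin.comp hgc).pow 2))
lemma cont_kF5 (hp : ContDiff ℝ (⊤ : ℕ∞) p) (hg : ContDiff ℝ (⊤ : ℕ∞) g) : Continuous (kF5 p g) := by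
  have hgc : Continuous g := hg.continuous
  exact ((hp1_smooth hg).continuous.pow 3).mul (((cont_q hp).comp hgc).pow 2)

end conts

lemma val_kXs {p g : ℝ → ℝ} (hp : ContDiff ℝ (⊤ : ℕ∞) p) (hg : ContDiff ℝ (⊤ : ℕ∞) g)
    (hper : ∀ α, p (α + 2*π) = p α) {S : ℝ} (hg0 : g 0 = 0) (hgS : g S = 2*π) :
    ∫ x in (0:ℝ)..S, kXs p g x = 0 := by
  have h := subst_int hg S
    (ψ := fun t => qq p t * XX p t * Real.sin t)
    (((cont_q hp).mul (cont_X hp)).mul Real.continuous_sin)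
  rw [hg0, hgS] at h
  rw [show (∫ x in (0:ℝ)..S, kXs p g x)
      = ∫ s in (0:ℝ)..S, deriv g s * (fun t => qq p t * XX p t * Real.sin t) (g s) from rfl, h]
  exact intXs hp hper

lemma val_kYc {p g : ℝ → ℝ} (hp : ContDiff ℝ (⊤ : ℕ∞) p) (hg : ContDiff ℝ (⊤ : ℕ∞) g)
    (hper : ∀ α, p (α + 2*π) = p α) {S : ℝ} (hg0 : g 0 = 0) (hgS : g S = 2*π) :
    ∫ x in (0:ℝ)..S, kYc p g x = 0 := by
  have h := subst_int hg S
    (ψ := fun t => qq p t * YY p t * Real.cos t)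
    (((cont_q hp).mul (cont_Y hp)).mul Real.continuous_cos)
  rw [hg0, hgS] at h
  rw [show (∫ x in (0:ℝ)..S, kYc p g x)
      = ∫ s in (0:ℝ)..S, deriv g s * (fun t => qq p t * YY p t * Real.cos t) (g s) from rfl, h]
  exact intYc hp hper

lemma val_kXc {p g : ℝ → ℝ} (hp : ContDiff ℝ (⊤ : ℕ∞) p) (hg : ContDiff ℝ (⊤ : ℕ∞) g)
    (hper : ∀ α, p (α + 2*π) = p α) {S : ℝ} (hg0 : g 0 = 0) (hgS : g S = 2*π) :
    ∫ x in (0:ℝ)..S, kXc p g x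
      = (1/2) * ∫ t in (0:ℝ)..(2*π), (p t + deriv (deriv p) t) * p t := by
  have h := subst_int hg S
    (ψ := fun t => qq p t * XX p t * Real.cos t)
    (((cont_q hp).mul (cont_X hp)).mul Real.continuous_cos)
  rw [hg0, hgS] at h
  rw [show (∫ x in (0:ℝ)..S, kXc p g x)
      = ∫ s in (0:ℝ)..S, deriv g s * (fun t => qq p t * XX p t * Real.cos t) (g s) from rfl, h]
  exact intXc hp hper

lemma val_kYs {p g : ℝ → ℝ} (hp : ContDiff ℝ (⊤ : ℕ∞) p) (hg : ContDiff ℝ (⊤ : ℕ∞) g)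
    (hper : ∀ α, p (α + 2*π) = p α) {S : ℝ} (hg0 : g 0 = 0) (hgS : g S = 2*π) :
    ∫ x in (0:ℝ)..S, kYs p g x
      = (1/2) * ∫ t in (0:ℝ)..(2*π), (p t + deriv (deriv p) t) * p t := by
  have h := subst_int hg S
    (ψ := fun t => qq p t * YY p t * Real.sin t)
    (((cont_q hp).mul (cont_Y hp)).mul Real.continuous_sin)
  rw [hg0, hgS] at h
  rw [show (∫ x in (0:ℝ)..S, kYs p g x)
      = ∫ s in (0:ℝ)..S, deriv g s * (fun t => qq p t * YY p t * Real.sin t) (g s) from rfl, h]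
  exact intYs hp hper

lemma val_kQsum {p g : ℝ → ℝ} (hp : ContDiff ℝ (⊤ : ℕ∞) p) (hg : ContDiff ℝ (⊤ : ℕ∞) g) (S : ℝ) :
    (∫ x in (0:ℝ)..S, kQ2 p g x) + (∫ x in (0:ℝ)..S, kQ3 p g x)
      = ∫ x in (0:ℝ)..S, kF5 p g x := by
  rw [← intervalIntegral.integral_add ((cont_kQ2 hp hg).intervalIntegrable _ _)
    ((cont_kQ3 hp hg).intervalIntegrable _ _)]
  apply intervalIntegral.integral_congr
  intro x _
  have hsc := Real.sin_sq_add_cos_sq (g x)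
  simp only [kQ2, kQ3, kF5]
  linear_combination (deriv g x ^ 3 * qq p (g x) ^ 2) * hsc

lemma comb10 {a b : ℝ} {k1 k2 k3 k4 k5 k6 k7 k8 k9 k10 : ℝ → ℝ}
    (h1 : IntervalIntegrable k1 volume a b) (h2 : IntervalIntegrable k2 volume a b)
    (h3 : IntervalIntegrable k3 volume a b) (h4 : IntervalIntegrable k4 volume a b)
    (h5 : IntervalIntegrable k5 volume a b) (h6 : IntervalIntegrable k6 volume a b)
    (h7 : IntervalIntegrable k7 volume a b) (h8 : IntervalIntegrable k8 volume a b)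
    (h9 : IntervalIntegrable k9 volume a b) (h10 : IntervalIntegrable k10 volume a b)
    (c1 c2 c3 c4 c5 c6 c7 c8 c9 c10 : ℝ) :
    (∫ x in a..b, (c1 * k1 x + c2 * k2 x + c3 * k3 x + c4 * k4 x + c5 * k5 x
      + c6 * k6 x + c7 * k7 x + c8 * k8 x + c9 * k9 x + c10 * k10 x))
      = c1 * (∫ x in a..b, k1 x) + c2 * (∫ x in a..b, k2 x) + c3 * (∫ x in a..b, k3 x)
        + c4 * (∫ x in a..b, k4 x) + c5 * (∫ x in a..b, k5 x) + c6 * (∫ x in a..b, k6 x)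
        + c7 * (∫ x in a..b, k7 x) + c8 * (∫ x in a..b, k8 x) + c9 * (∫ x in a..b, k9 x)
        + c10 * (∫ x in a..b, k10 x) := by
  have i1 := h1.const_mul c1
  have i2 := h2.const_mul c2
  have i3 := h3.const_mul c3
  have i4 := h4.const_mul c4
  have i5 := h5.const_mul c5
  have i6 := h6.const_mul c6
  have i7 := h7.const_mul c7
  have i8 := h8.const_mul c8
  have i9 := h9.const_mul c9
  have i10 := h10.const_mul c10
  rw [intervalIntegral.integral_add
      ((((((((i1.add i2).add i3).add i4).add i5).add i6).add i7).add i8).add i9) i10,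
    intervalIntegral.integral_add
      (((((((i1.add i2).add i3).add i4).add i5).add i6).add i7).add i8) i9,
    intervalIntegral.integral_add
      ((((((i1.add i2).add i3).add i4).add i5).add i6).add i7) i8,
    intervalIntegral.integral_add
      (((((i1.add i2).add i3).add i4).add i5).add i6) i7,
    intervalIntegral.integral_add
      ((((i1.add i2).add i3).add i4).add i5) i6,
    intervalIntegral.integral_add
      (((i1.add i2).add i3).add i4) i5,
    intervalIntegral.integral_add ((i1.add i2).add i3) i4,
    intervalIntegral.integral_add (i1.add i2) i3,
    intervalIntegral.integral_add i1 i2]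
  simp only [intervalIntegral.integral_const_mul]

lemma comb5 {a b : ℝ} {k1 k2 k3 k4 k5 : ℝ → ℝ}
    (h1 : IntervalIntegrable k1 volume a b) (h2 : IntervalIntegrable k2 volume a b)
    (h3 : IntervalIntegrable k3 volume a b) (h4 : IntervalIntegrable k4 volume a b)
    (h5 : IntervalIntegrable k5 volume a b)
    (c1 c2 c3 c4 c5 : ℝ) :
    (∫ x in a..b, (c1 * k1 x + c2 * k2 x + c3 * k3 x + c4 * k4 x + c5 * k5 x))
      = c1 * (∫ x in a..b, k1 x) + c2 * (∫ x in a..b, k2 x) + c3 * (∫ x in a..b, k3 x)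
        + c4 * (∫ x in a..b, k4 x) + c5 * (∫ x in a..b, k5 x) := by
  have i1 := h1.const_mul c1
  have i2 := h2.const_mul c2
  have i3 := h3.const_mul c3
  have i4 := h4.const_mul c4
  have i5 := h5.const_mul c5
  rw [intervalIntegral.integral_add (((i1.add i2).add i3).add i4) i5,
    intervalIntegral.integral_add ((i1.add i2).add i3) i4,
    intervalIntegral.integral_add (i1.add i2) i3,
    intervalIntegral.integral_add i1 i2]
  simp only [intervalIntegral.integral_const_mul]

lemma ginv_cont {g ginv : ℝ → ℝ} {S : ℝ} (hS : 0 < S) (hgc : Continuous g)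
    (hmono : StrictMonoOn g (Icc 0 S)) (hmaps : MapsTo g (Icc 0 S) (Icc 0 (2*π)))
    (hg0 : g 0 = 0) (hgS : g S = 2*π) (hginv : ∀ s ∈ Icc 0 S, ginv (g s) = s) :
    ContinuousOn ginv (Icc 0 (2*π)) := by
  haveI : CompactSpace (Icc (0:ℝ) S) := isCompact_iff_compactSpace.mp isCompact_Icc
  have hsurj : ∀ y : Icc (0:ℝ) (2*π), ∃ x : Icc (0:ℝ) S, g x = (y:ℝ) := by
    intro y
    have hsub : Icc (g 0) (g S) ⊆ g '' (Icc 0 S) :=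
      intermediate_value_Icc hS.le hgc.continuousOn
    rw [hg0, hgS] at hsub
    obtain ⟨x, hx, hgx⟩ := hsub y.2
    exact ⟨⟨x, hx⟩, hgx⟩
  let e : Icc (0:ℝ) S ≃ Icc (0:ℝ) (2*π) :=
    Equiv.ofBijective (fun x => ⟨g x, hmaps x.2⟩)
      ⟨fun a b hab => Subtype.ext (hmono.injOn a.2 b.2 (congrArg Subtype.val hab)),
       fun y => by obtain ⟨x, hx⟩ := hsurj y; exact ⟨x, Subtype.ext hx⟩⟩
  have he : Continuous e := Continuous.subtype_mk (hgc.comp continuous_subtype_val) _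
  let homeo := he.homeoOfEquivCompactToT2
  rw [continuousOn_iff_continuous_restrict]
  have hres : (Icc (0:ℝ) (2*π)).domRestrict ginv
      = fun y => ((homeo.symm y : Icc (0:ℝ) S) : ℝ) := by
    funext y
    have h1 : g ((homeo.symm y : Icc (0:ℝ) S) : ℝ) = (y:ℝ) :=
      congrArg Subtype.val (homeo.apply_symm_apply y)
    have h2 := hginv _ (homeo.symm y).2
    rw [h1] at h2
    exact h2
  rw [hres]
  exact continuous_subtype_val.comp homeo.symm.continuous

lemma val_kF5 {p g ginv : ℝ → ℝ} (hp : ContDiff ℝ (⊤ : ℕ∞) p) (hg : ContDiff ℝ (⊤ : ℕ∞) g)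
    {S : ℝ} (hS : 0 < S) (hg0 : g 0 = 0) (hgS : g S = 2*π)
    (hmono : StrictMonoOn g (Icc 0 S)) (hmaps : MapsTo g (Icc 0 S) (Icc 0 (2*π)))
    (hginv : ∀ s ∈ Icc 0 S, ginv (g s) = s) :
    ∫ x in (0:ℝ)..S, kF5 p g x
      = ∫ t in (0:ℝ)..(2*π), (deriv (deriv p) t + p t) ^ 2 * deriv g (ginv t) ^ 2 := by
  have hgic := ginv_cont hS hg.continuous hmono hmaps hg0 hgS hginv
  have himg : g '' (uIcc (0:ℝ) S) ⊆ Icc 0 (2*π) := by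
    rw [uIcc_of_le hS.le]; exact hmaps.image_subset
  have hψ : ContinuousOn (fun t => (deriv (deriv p) t + p t) ^ 2 * deriv g (ginv t) ^ 2)
      (g '' (uIcc (0:ℝ) S)) := by
    refine ContinuousOn.mono (s := Icc (0:ℝ) (2*π)) ?_ himg
    exact ((cont_q hp).continuousOn.pow 2).mul
      (((hp1_smooth hg).continuous.comp_continuousOn hgic).pow 2)
  have h := intervalIntegral.integral_comp_smul_deriv' (a := (0:ℝ)) (b := S)
    (f := g) (f' := deriv g)
    (g := fun t => (deriv (deriv p) t + p t) ^ 2 * deriv g (ginv t) ^ 2)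
    (fun x _ => (hg.differentiable (by simp) x).hasDerivAt)
    ((hp1_smooth hg).continuous.continuousOn) hψ
  rw [hg0, hgS] at h
  rw [← h]
  apply intervalIntegral.integral_congr
  intro x hx
  rw [uIcc_of_le hS.le] at hx
  have hx' := hginv x hx
  simp only [kF5, smul_eq_mul, Function.comp_apply, hx', qq]
  ring

noncomputable def C1f (p g : ℝ → ℝ) : ℝ → ℝ := fun s =>
  -(deriv g s * qq p (g s) * Wf p g s * Real.cos (g s) ^ 2)
    + deriv g s ^ 3 * qq p (g s) ^ 2 * (Real.sin (g s) * Real.cos (g s))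
noncomputable def C2f (p g : ℝ → ℝ) : ℝ → ℝ := fun s =>
  deriv g s * qq p (g s) * Wf p g s * (Real.sin (g s) * Real.cos (g s))
    - deriv g s ^ 3 * qq p (g s) ^ 2 * Real.sin (g s) ^ 2
noncomputable def C3f (p g : ℝ → ℝ) : ℝ → ℝ := fun s =>
  -(deriv g s * qq p (g s) * Wf p g s * (Real.sin (g s) * Real.cos (g s)))
    - deriv g s ^ 3 * qq p (g s) ^ 2 * Real.cos (g s) ^ 2
noncomputable def C4f (p g : ℝ → ℝ) : ℝ → ℝ := fun s =>
  deriv g s * qq p (g s) * Wf p g s * Real.sin (g s) ^ 2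
    + deriv g s ^ 3 * qq p (g s) ^ 2 * (Real.sin (g s) * Real.cos (g s))
noncomputable def C5f (p g : ℝ → ℝ) : ℝ → ℝ := fun s =>
  deriv g s * qq p (g s) * (XX p (g s) * Real.cos (g s) - YY p (g s) * Real.sin (g s))
noncomputable def C6f (p g : ℝ → ℝ) : ℝ → ℝ := fun s =>
  -(deriv g s * qq p (g s) * XX p (g s) * Real.sin (g s))
noncomputable def C7f (p g : ℝ → ℝ) : ℝ → ℝ := fun s =>
  deriv g s * qq p (g s) * YY p (g s) * Real.cos (g s)
noncomputable def C8f (p g : ℝ → ℝ) : ℝ → ℝ := fun s =>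
  deriv g s * qq p (g s) * (XX p (g s) * Real.sin (g s) + YY p (g s) * Real.cos (g s))
noncomputable def C9f (p g : ℝ → ℝ) : ℝ → ℝ := fun s =>
  -(deriv g s * qq p (g s) * YY p (g s) * Real.sin (g s))
noncomputable def C10f (p g : ℝ → ℝ) : ℝ → ℝ := fun s =>
  -(deriv g s * qq p (g s) * XX p (g s) * Real.cos (g s))


/-- Behaviour of ∫∫ [L₁₁+L₂₂]·L₁₂ under a change of parameter g, where
L(s₁,s₂) = ω(γ(g(s₁)), γ(g(s₂))), Lᵢⱼ are its second partial derivatives and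
h(α) = g'(g⁻¹(α)). -/
theorem change_of_parameter_integral_L11_add_L22_mul_L12
    (p : ℝ → ℝ) (hp : ContDiff ℝ (⊤ : ℕ∞) p) (hper : ∀ α, p (α + 2 * π) = p α)
    (hcurv : ∀ α, 0 < deriv (deriv p) α + p α)
    (γ : ℝ → ℝ × ℝ)
    (hγ : ∀ α, γ α = deriv p α • eVec α - p α • Jrot (eVec α))
    (S : ℝ) (hS : 0 < S)
    (g ginv : ℝ → ℝ) (hg : ContDiff ℝ (⊤ : ℕ∞) g)
    (hg0 : g 0 = 0) (hgS : g S = 2 * π)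
    (hg' : ∀ s ∈ Icc 0 S, 0 < deriv g s)
    (hmono : StrictMonoOn g (Icc 0 S))
    (hmaps : MapsTo g (Icc 0 S) (Icc 0 (2 * π)))
    (hginv : ∀ s ∈ Icc 0 S, ginv (g s) = s) :
    (∫ s₁ in (0:ℝ)..S, ∫ s₂ in (0:ℝ)..S,
        (deriv (deriv (fun u => om (γ (g u)) (γ (g s₂)))) s₁
          + deriv (deriv (fun v => om (γ (g s₁)) (γ (g v)))) s₂)
        * deriv (fun u => deriv (fun v => om (γ (g u)) (γ (g v))) s₂) s₁)
      = -2 * ((1 / 2) * ∫ α in (0:ℝ)..(2 * π), (p α + deriv (deriv p) α) * p α)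
          * ∫ α in (0:ℝ)..(2 * π),
              (deriv (deriv p) α + p α) ^ 2 * (deriv g (ginv α)) ^ 2 := by
  -- pointwise decomposition of the integrand
  have hpoint : ∀ s₁ s₂ : ℝ,
      (deriv (deriv (fun u => om (γ (g u)) (γ (g s₂)))) s₁
          + deriv (deriv (fun v => om (γ (g s₁)) (γ (g v)))) s₂)
        * deriv (fun u => deriv (fun v => om (γ (g u)) (γ (g v))) s₂) s₁
      = C1f p g s₁ * kXs p g s₂ + C2f p g s₁ * kXc p g s₂ + C3f p g s₁ * kYs p g s₂
        + C4f p g s₁ * kYc p g s₂ + C5f p g s₁ * kW1 p g s₂ + C6f p g s₁ * kW2 p g s₂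
        + C7f p g s₁ * kW3 p g s₂ + C8f p g s₁ * kQ1 p g s₂ + C9f p g s₁ * kQ2 p g s₂
        + C10f p g s₁ * kQ3 p g s₂ := by
    intro s₁ s₂
    rw [L11_eq hp hg hγ (g s₂) s₁, L22_eq hp hg hγ s₁ s₂, L12_eq hp hg hγ s₁ s₂]
    simp only [C1f, C2f, C3f, C4f, C5f, C6f, C7f, C8f, C9f, C10f,
      kXs, kXc, kYs, kYc, kW1, kW2, kW3, kQ1, kQ2, kQ3]
    ring
  have iXs : IntervalIntegrable (kXs p g) volume 0 S := (cont_kXs hp hg).intervalIntegrable 0 S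
  have iXc : IntervalIntegrable (kXc p g) volume 0 S := (cont_kXc hp hg).intervalIntegrable 0 S
  have iYs : IntervalIntegrable (kYs p g) volume 0 S := (cont_kYs hp hg).intervalIntegrable 0 S
  have iYc : IntervalIntegrable (kYc p g) volume 0 S := (cont_kYc hp hg).intervalIntegrable 0 S
  have iW1 : IntervalIntegrable (kW1 p g) volume 0 S := (cont_kW1 hp hg).intervalIntegrable 0 S
  have iW2 : IntervalIntegrable (kW2 p g) volume 0 S := (cont_kW2 hp hg).intervalIntegrable 0 S
  have iW3 : IntervalIntegrable (kW3 p g) volume 0 S := (cont_kW3 hp hg).intervalIntegrable 0 S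
  have iQ1 : IntervalIntegrable (kQ1 p g) volume 0 S := (cont_kQ1 hp hg).intervalIntegrable 0 S
  have iQ2 : IntervalIntegrable (kQ2 p g) volume 0 S := (cont_kQ2 hp hg).intervalIntegrable 0 S
  have iQ3 : IntervalIntegrable (kQ3 p g) volume 0 S := (cont_kQ3 hp hg).intervalIntegrable 0 S
  have iF5 : IntervalIntegrable (kF5 p g) volume 0 S := (cont_kF5 hp hg).intervalIntegrable 0 S
  have hInnerEq : ∀ s₁ : ℝ,
      (∫ s₂ in (0:ℝ)..S,
        (C1f p g s₁ * kXs p g s₂ + C2f p g s₁ * kXc p g s₂ + C3f p g s₁ * kYs p g s₂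
        + C4f p g s₁ * kYc p g s₂ + C5f p g s₁ * kW1 p g s₂ + C6f p g s₁ * kW2 p g s₂
        + C7f p g s₁ * kW3 p g s₂ + C8f p g s₁ * kQ1 p g s₂ + C9f p g s₁ * kQ2 p g s₂
        + C10f p g s₁ * kQ3 p g s₂))
      = C1f p g s₁ * (∫ x in (0:ℝ)..S, kXs p g x) + C2f p g s₁ * (∫ x in (0:ℝ)..S, kXc p g x)
        + C3f p g s₁ * (∫ x in (0:ℝ)..S, kYs p g x) + C4f p g s₁ * (∫ x in (0:ℝ)..S, kYc p g x)
        + C5f p g s₁ * (∫ x in (0:ℝ)..S, kW1 p g x) + C6f p g s₁ * (∫ x in (0:ℝ)..S, kW2 p g x)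
        + C7f p g s₁ * (∫ x in (0:ℝ)..S, kW3 p g x) + C8f p g s₁ * (∫ x in (0:ℝ)..S, kQ1 p g x)
        + C9f p g s₁ * (∫ x in (0:ℝ)..S, kQ2 p g x)
        + C10f p g s₁ * (∫ x in (0:ℝ)..S, kQ3 p g x) :=
    fun s₁ => comb10 iXs iXc iYs iYc iW1 iW2 iW3 iQ1 iQ2 iQ3 _ _ _ _ _ _ _ _ _ _
  have hK1 := val_kXs hp hg hper hg0 hgS
  have hK2 := val_kXc hp hg hper hg0 hgS
  have hK3 := val_kYs hp hg hper hg0 hgS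
  have hK4 := val_kYc hp hg hper hg0 hgS
  have hpoint2 : ∀ s₁ : ℝ,
      C1f p g s₁ * (∫ x in (0:ℝ)..S, kXs p g x) + C2f p g s₁ * (∫ x in (0:ℝ)..S, kXc p g x)
        + C3f p g s₁ * (∫ x in (0:ℝ)..S, kYs p g x) + C4f p g s₁ * (∫ x in (0:ℝ)..S, kYc p g x)
        + C5f p g s₁ * (∫ x in (0:ℝ)..S, kW1 p g x) + C6f p g s₁ * (∫ x in (0:ℝ)..S, kW2 p g x)
        + C7f p g s₁ * (∫ x in (0:ℝ)..S, kW3 p g x) + C8f p g s₁ * (∫ x in (0:ℝ)..S, kQ1 p g x)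
        + C9f p g s₁ * (∫ x in (0:ℝ)..S, kQ2 p g x)
        + C10f p g s₁ * (∫ x in (0:ℝ)..S, kQ3 p g x)
      = ((∫ x in (0:ℝ)..S, kQ1 p g x) - (∫ x in (0:ℝ)..S, kW2 p g x)) * kXs p g s₁
        + ((∫ x in (0:ℝ)..S, kW1 p g x) - (∫ x in (0:ℝ)..S, kQ3 p g x)) * kXc p g s₁
        + (-((∫ x in (0:ℝ)..S, kW1 p g x) + (∫ x in (0:ℝ)..S, kQ2 p g x))) * kYs p g s₁
        + ((∫ x in (0:ℝ)..S, kW3 p g x) + (∫ x in (0:ℝ)..S, kQ1 p g x)) * kYc p g s₁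
        + (-((1/2) * ∫ t in (0:ℝ)..(2*π), (p t + deriv (deriv p) t) * p t)) * kF5 p g s₁ := by
    intro s₁
    rw [hK1, hK2, hK3, hK4]
    simp only [C1f, C2f, C3f, C4f, C5f, C6f, C7f, C8f, C9f, C10f,
      kXs, kXc, kYs, kYc, kF5]
    linear_combination
      (-(((1:ℝ)/2) * (∫ t in (0:ℝ)..(2*π), (p t + deriv (deriv p) t) * p t)
        * deriv g s₁ ^ 3 * qq p (g s₁) ^ 2)) * Real.sin_sq_add_cos_sq (g s₁)
  simp only [hpoint]
  simp only [hInnerEq]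
  simp only [hpoint2]
  rw [comb5 iXs iXc iYs iYc iF5]
  rw [hK1, hK2, hK3, hK4]
  have hQsum := val_kQsum hp hg (S := S)
  have hF5 := val_kF5 hp hg hS hg0 hgS hmono hmaps hginv
  rw [hF5] at hQsum
  rw [hF5]
  linear_combination
    (-((1:ℝ)/2) * (∫ t in (0:ℝ)..(2*π), (p t + deriv (deriv p) t) * p t)) * hQsum
end

section
/- Let p: ℝ → ℝ be smooth and 2π-periodic with p'' + p > 0, let γ(α) := p'(α)e_α − p(α)Je_α, let g: [0,S] → [0,2π] be a smooth increasing bijection with smooth inverse, and set h(α) := g'(g⁻¹(α)) and L(s₁,s₂) := ω(γ(g(s₁)), γ(g(s₂))). Then 2∫∫_{[0,S]²} L₁₂(s₁,s₂)² ds₁ ds₂ = (∫₀^{2π} (p''+p)² h dα)² − (∫₀^{2π} (p''+p)² h cos(2α) dα)² − (∫₀^{2π} (p''+p)² h sin(2α) dα)². -/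
open Real Set MeasureTheory intervalIntegral

lemma om_smul_eVec (a b x y : ℝ) :
    om (a • eVec x) (b • eVec y) = a * b * Real.sin (y - x) := by
  simp [om, eVec, Real.sin_sub]; ring

lemma trig_expand (F1 F2 x y : ℝ) :
    2 * (F1 * F2 * Real.sin (y - x)) ^ 2
      = F1 ^ 2 * F2 ^ 2 - (F1 ^ 2 * Real.cos (2 * x)) * (F2 ^ 2 * Real.cos (2 * y))
        - (F1 ^ 2 * Real.sin (2 * x)) * (F2 ^ 2 * Real.sin (2 * y)) := by
  have h1 : Real.cos (2 * (y - x)) = 1 - 2 * Real.sin (y - x) ^ 2 := by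
    rw [Real.cos_two_mul]
    nlinarith [Real.sin_sq_add_cos_sq (y - x)]
  have h2 : Real.cos (2 * (y - x))
      = Real.cos (2*y) * Real.cos (2*x) + Real.sin (2*y) * Real.sin (2*x) := by
    rw [show 2 * (y - x) = 2*y - 2*x by ring, Real.cos_sub]
  have h3 : 2 * Real.sin (y - x) ^ 2
      = 1 - (Real.cos (2*y) * Real.cos (2*x) + Real.sin (2*y) * Real.sin (2*x)) := by
    linarith [h1.symm.trans h2]
  linear_combination (F1 ^ 2 * F2 ^ 2) * h3

lemma gamma_hasDerivAt (p : ℝ → ℝ) (hp : ContDiff ℝ (⊤ : ℕ∞) p)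
    (γ : ℝ → ℝ × ℝ)
    (hγ : ∀ α, γ α = deriv p α • eVec α - p α • Jrot (eVec α)) :
    ∀ α, HasDerivAt γ ((deriv (deriv p) α + p α) • eVec α) α := by
  have hp' : ContDiff ℝ (⊤ : ℕ∞) p := hp.of_le (by simp)
  have hp1 : ContDiff ℝ (⊤ : ℕ∞) (deriv p) := (contDiff_infty_iff_deriv.mp hp').2
  intro α
  have hps : HasDerivAt p (deriv p α) α := (hp'.differentiable (by norm_num) α).hasDerivAt
  have hps' : HasDerivAt (deriv p) (deriv (deriv p) α) α :=
    (hp1.differentiable (by norm_num) α).hasDerivAt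
  have hx : HasDerivAt (fun β => -(deriv p β * Real.sin β) + p β * Real.cos β)
      (-((deriv (deriv p) α + p α) * Real.sin α)) α := by
    have h := ((hps'.mul (Real.hasDerivAt_sin α)).neg).add (hps.mul (Real.hasDerivAt_cos α))
    refine h.congr_deriv ?_
    ring
  have hy : HasDerivAt (fun β => deriv p β * Real.cos β + p β * Real.sin β)
      ((deriv (deriv p) α + p α) * Real.cos α) α := by
    have h := (hps'.mul (Real.hasDerivAt_cos α)).add (hps.mul (Real.hasDerivAt_sin α))
    refine h.congr_deriv ?_
    ring
  have hfun : γ = fun β => (-(deriv p β * Real.sin β) + p β * Real.cos β,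
      deriv p β * Real.cos β + p β * Real.sin β) := by
    funext β
    rw [hγ]
    simp [eVec, Jrot, Prod.ext_iff]
  rw [hfun]
  have h := hx.prodMk hy
  refine h.congr_deriv ?_
  simp [eVec, Prod.ext_iff]

lemma change_of_var (q : ℝ → ℝ)
    (S : ℝ) (hS : 0 < S)
    (g ginv : ℝ → ℝ) (hg : ContDiff ℝ (⊤ : ℕ∞) g)
    (hg0 : g 0 = 0) (hgS : g S = 2 * π)
    (hg' : ∀ s ∈ Icc 0 S, 0 < deriv g s)
    (hmono : StrictMonoOn g (Icc 0 S))
    (hginv : ∀ s ∈ Icc 0 S, ginv (g s) = s)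
    (φ : ℝ → ℝ) :
    (∫ α in (0:ℝ)..(2*π), q α ^ 2 * deriv g (ginv α) * φ α)
      = ∫ s in (0:ℝ)..S, (deriv g s * q (g s)) ^ 2 * φ (g s) := by
  have hg'' : ContDiff ℝ (⊤ : ℕ∞) g := hg.of_le (by simp)
  have hgdiff : Differentiable ℝ g := hg''.differentiable (by norm_num)
  have h2π : (0:ℝ) < 2 * π := by positivity
  have himg : g '' Ioo 0 S = Ioo 0 (2*π) := by
    apply Subset.antisymm
    · rintro _ ⟨s, hs, rfl⟩
      constructor
      · rw [← hg0]
        exact hmono ⟨le_refl 0, hS.le⟩ ⟨hs.1.le, hs.2.le⟩ hs.1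
      · rw [← hgS]
        exact hmono ⟨hs.1.le, hs.2.le⟩ ⟨hS.le, le_refl S⟩ hs.2
    · intro y hy
      have hy' : y ∈ Icc (g 0) (g S) := by
        rw [hg0, hgS]; exact Ioo_subset_Icc_self hy
      obtain ⟨s, hsmem, rfl⟩ := (hg''.continuous.continuousOn).surjOn_Icc
        (left_mem_Icc.mpr hS.le) (right_mem_Icc.mpr hS.le) hy'
      refine ⟨s, ⟨?_, ?_⟩, rfl⟩
      · rcases eq_or_lt_of_le hsmem.1 with h | h
        · exfalso; rw [← h, hg0] at hy; exact lt_irrefl _ hy.1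
        · exact h
      · rcases eq_or_lt_of_le hsmem.2 with h | h
        · exfalso; rw [h, hgS] at hy; exact lt_irrefl _ hy.2
        · exact h
  rw [intervalIntegral.integral_of_le h2π.le, intervalIntegral.integral_of_le hS.le,
    MeasureTheory.integral_Ioc_eq_integral_Ioo, MeasureTheory.integral_Ioc_eq_integral_Ioo,
    ← himg]
  rw [MeasureTheory.integral_image_eq_integral_abs_deriv_smul measurableSet_Ioo
    (fun x _ => (hgdiff x).hasDerivAt.hasDerivWithinAt)
    (hmono.injOn.mono Ioo_subset_Icc_self)]
  apply MeasureTheory.setIntegral_congr_fun measurableSet_Ioo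
  intro s hs
  have hs' : s ∈ Icc 0 S := Ioo_subset_Icc_self hs
  simp only [hginv s hs', abs_of_pos (hg' s hs'), smul_eq_mul]
  ring

/-- Behaviour of 2∫∫ L₁₂² under a change of parameter g, where
L₁₂(s₁,s₂) = ω((γ∘g)'(s₁), (γ∘g)'(s₂)) and h(α) = g'(g⁻¹(α)). -/
theorem change_of_parameter_integral_L12_sq
    (p : ℝ → ℝ) (hp : ContDiff ℝ (⊤ : ℕ∞) p) (hper : ∀ α, p (α + 2 * π) = p α)
    (hcurv : ∀ α, 0 < deriv (deriv p) α + p α)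
    (γ : ℝ → ℝ × ℝ)
    (hγ : ∀ α, γ α = deriv p α • eVec α - p α • Jrot (eVec α))
    (S : ℝ) (hS : 0 < S)
    (g ginv : ℝ → ℝ) (hg : ContDiff ℝ (⊤ : ℕ∞) g)
    (hg0 : g 0 = 0) (hgS : g S = 2 * π)
    (hg' : ∀ s ∈ Icc 0 S, 0 < deriv g s)
    (hmono : StrictMonoOn g (Icc 0 S))
    (hmaps : MapsTo g (Icc 0 S) (Icc 0 (2 * π)))
    (hginv : ∀ s ∈ Icc 0 S, ginv (g s) = s) :
    2 * ∫ s₁ in (0:ℝ)..S, ∫ s₂ in (0:ℝ)..S,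
        (om (deriv (fun s => γ (g s)) s₁) (deriv (fun s => γ (g s)) s₂)) ^ 2
      = (∫ α in (0:ℝ)..(2 * π),
            (deriv (deriv p) α + p α) ^ 2 * deriv g (ginv α)) ^ 2
        - (∫ α in (0:ℝ)..(2 * π),
            (deriv (deriv p) α + p α) ^ 2 * deriv g (ginv α) * Real.cos (2 * α)) ^ 2
        - (∫ α in (0:ℝ)..(2 * π),
            (deriv (deriv p) α + p α) ^ 2 * deriv g (ginv α) * Real.sin (2 * α)) ^ 2 := by
  -- basic regularity
  have hp' : ContDiff ℝ (⊤ : ℕ∞) p := hp.of_le (by simp)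
  have hp1 : ContDiff ℝ (⊤ : ℕ∞) (deriv p) := (contDiff_infty_iff_deriv.mp hp').2
  have hp2 : Continuous (deriv (deriv p)) := ((contDiff_infty_iff_deriv.mp hp1).2).continuous
  have hg'' : ContDiff ℝ (⊤ : ℕ∞) g := hg.of_le (by simp)
  have hg1 : Continuous (deriv g) := ((contDiff_infty_iff_deriv.mp hg'').2).continuous
  set q : ℝ → ℝ := fun α => deriv (deriv p) α + p α with hq
  have hqc : Continuous q := hp2.add hp.continuous
  -- derivative of γ ∘ g
  have hγd := gamma_hasDerivAt p hp γ hγ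
  have hderiv : ∀ s, deriv (fun s => γ (g s)) s
      = (deriv g s * q (g s)) • eVec (g s) := by
    intro s
    have hgd : HasDerivAt g (deriv g s) s := (hg''.differentiable (by norm_num) s).hasDerivAt
    have h := (hγd (g s)).scomp s hgd
    rw [show (fun s => γ (g s)) = γ ∘ g from rfl, h.deriv, smul_smul, mul_comm]
  -- single-variable integrands
  set A : ℝ → ℝ := fun s => (deriv g s * q (g s)) ^ 2 with hA
  set B : ℝ → ℝ := fun s => (deriv g s * q (g s)) ^ 2 * Real.cos (2 * g s) with hB
  set C : ℝ → ℝ := fun s => (deriv g s * q (g s)) ^ 2 * Real.sin (2 * g s) with hC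
  have hFc : Continuous fun s => deriv g s * q (g s) := hg1.mul (hqc.comp hg.continuous)
  have hAc : Continuous A := hFc.pow 2
  have hBc : Continuous B := hAc.mul ((Real.continuous_cos).comp (continuous_const.mul hg.continuous))
  have hCc : Continuous C := hAc.mul ((Real.continuous_sin).comp (continuous_const.mul hg.continuous))
  set IA : ℝ := ∫ s in (0:ℝ)..S, A s with hIA
  set IB : ℝ := ∫ s in (0:ℝ)..S, B s with hIB
  set IC : ℝ := ∫ s in (0:ℝ)..S, C s with hIC
  -- pointwise expansion
  have hptx : ∀ s₁ s₂ : ℝ,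
      2 * (om (deriv (fun s => γ (g s)) s₁) (deriv (fun s => γ (g s)) s₂)) ^ 2
        = A s₁ * A s₂ - B s₁ * B s₂ - C s₁ * C s₂ := by
    intro s₁ s₂
    rw [hderiv s₁, hderiv s₂, om_smul_eVec]
    exact trig_expand _ _ _ _
  -- inner integral
  have hinner : ∀ s₁ : ℝ,
      (∫ s₂ in (0:ℝ)..S, 2 * (om (deriv (fun s => γ (g s)) s₁)
          (deriv (fun s => γ (g s)) s₂)) ^ 2)
        = A s₁ * IA - B s₁ * IB - C s₁ * IC := by
    intro s₁
    have h1 : (∫ s₂ in (0:ℝ)..S, 2 * (om (deriv (fun s => γ (g s)) s₁)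
        (deriv (fun s => γ (g s)) s₂)) ^ 2)
        = ∫ s₂ in (0:ℝ)..S, (A s₁ * A s₂ - B s₁ * B s₂ - C s₁ * C s₂) := by
      apply intervalIntegral.integral_congr
      intro s₂ _
      exact hptx s₁ s₂
    rw [h1]
    rw [intervalIntegral.integral_sub
        (((show Continuous fun s₂ => A s₁ * A s₂ from continuous_const.mul hAc).intervalIntegrable _ _).sub ((show Continuous fun s₂ => B s₁ * B s₂ from continuous_const.mul hBc).intervalIntegrable _ _))
        ((show Continuous fun s₂ => C s₁ * C s₂ from continuous_const.mul hCc).intervalIntegrable _ _),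
      intervalIntegral.integral_sub ((show Continuous fun s₂ => A s₁ * A s₂ from continuous_const.mul hAc).intervalIntegrable _ _)
        ((show Continuous fun s₂ => B s₁ * B s₂ from continuous_const.mul hBc).intervalIntegrable _ _),
      intervalIntegral.integral_const_mul, intervalIntegral.integral_const_mul,
      intervalIntegral.integral_const_mul]
  -- the double integral
  have hdouble : 2 * (∫ s₁ in (0:ℝ)..S, ∫ s₂ in (0:ℝ)..S,
      (om (deriv (fun s => γ (g s)) s₁) (deriv (fun s => γ (g s)) s₂)) ^ 2)
      = IA * IA - IB * IB - IC * IC := by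
    rw [← intervalIntegral.integral_const_mul]
    have h2 : (∫ s₁ in (0:ℝ)..S, 2 * ∫ s₂ in (0:ℝ)..S,
        (om (deriv (fun s => γ (g s)) s₁) (deriv (fun s => γ (g s)) s₂)) ^ 2)
        = ∫ s₁ in (0:ℝ)..S, (A s₁ * IA - B s₁ * IB - C s₁ * IC) := by
      apply intervalIntegral.integral_congr
      intro s₁ _
      show 2 * (∫ s₂ in (0:ℝ)..S,
          (om (deriv (fun s => γ (g s)) s₁) (deriv (fun s => γ (g s)) s₂)) ^ 2)
        = A s₁ * IA - B s₁ * IB - C s₁ * IC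
      rw [← hinner s₁, intervalIntegral.integral_const_mul]
    rw [h2]
    rw [intervalIntegral.integral_sub
        (((show Continuous fun s₁ => A s₁ * IA from hAc.mul continuous_const).intervalIntegrable _ _).sub ((show Continuous fun s₁ => B s₁ * IB from hBc.mul continuous_const).intervalIntegrable _ _))
        ((show Continuous fun s₁ => C s₁ * IC from hCc.mul continuous_const).intervalIntegrable _ _),
      intervalIntegral.integral_sub ((show Continuous fun s₁ => A s₁ * IA from hAc.mul continuous_const).intervalIntegrable _ _)
        ((show Continuous fun s₁ => B s₁ * IB from hBc.mul continuous_const).intervalIntegrable _ _),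
      intervalIntegral.integral_mul_const, intervalIntegral.integral_mul_const,
      intervalIntegral.integral_mul_const]
  -- identify the three RHS integrals
  have hRA : (∫ α in (0:ℝ)..(2 * π), q α ^ 2 * deriv g (ginv α)) = IA := by
    have h := change_of_var q S hS g ginv hg hg0 hgS hg' hmono hginv (fun _ => (1:ℝ))
    simpa using h
  have hRB : (∫ α in (0:ℝ)..(2 * π), q α ^ 2 * deriv g (ginv α) * Real.cos (2 * α)) = IB := by
    exact change_of_var q S hS g ginv hg hg0 hgS hg' hmono hginv (fun α => Real.cos (2 * α))
  have hRC : (∫ α in (0:ℝ)..(2 * π), q α ^ 2 * deriv g (ginv α) * Real.sin (2 * α)) = IC := by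
    exact change_of_var q S hS g ginv hg hg0 hgS hg' hmono hginv (fun α => Real.sin (2 * α))
  calc 2 * (∫ s₁ in (0:ℝ)..S, ∫ s₂ in (0:ℝ)..S,
      (om (deriv (fun s => γ (g s)) s₁) (deriv (fun s => γ (g s)) s₂)) ^ 2)
      = IA * IA - IB * IB - IC * IC := hdouble
    _ = IA ^ 2 - IB ^ 2 - IC ^ 2 := by ring
    _ = _ := by rw [← hRA, ← hRB, ← hRC]
end

section
/- Let γ: ℝ → ℝ² be a smooth S-periodic unit-speed curve (‖γ'(s)‖ = 1 for all s) with ω(γ'(s), γ''(s)) > 0 for all s, parametrizing the boundary of a convex domain with positive orientation and total turning 2π (i.e. ∫₀^S ω(γ'(s),γ''(s)) ds = 2π). Then ∫∫_{[0,S]²} [L₁₁(s₁,s₂) + L₂₂(s₁,s₂)] · L₁₂(s₁,s₂) ds₁ ds₂ = −4π A(D), where A(D) := ½ ∫₀^S ω(γ(s), γ'(s)) ds. -/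
open Real Set MeasureTheory intervalIntegral

/-- L₁₁(t₁,t₂) = ω(γ''(t₁), γ(t₂)). -/
noncomputable def L11 (γ : ℝ → ℝ × ℝ) (t₁ t₂ : ℝ) : ℝ := om (deriv (deriv γ) t₁) (γ t₂)

/-- L₂₂(t₁,t₂) = ω(γ(t₁), γ''(t₂)). -/
noncomputable def L22 (γ : ℝ → ℝ × ℝ) (t₁ t₂ : ℝ) : ℝ := om (γ t₁) (deriv (deriv γ) t₂)

/-- L₁₂(t₁,t₂) = ω(γ'(t₁), γ'(t₂)). -/
noncomputable def L12 (γ : ℝ → ℝ × ℝ) (t₁ t₂ : ℝ) : ℝ := om (deriv γ t₁) (deriv γ t₂)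

lemma main_aux (S : ℝ) (f1 f2 g1 g2 h1 h2 : ℝ → ℝ)
    (Hf1 : ∀ s, HasDerivAt f1 (g1 s) s) (Hf2 : ∀ s, HasDerivAt f2 (g2 s) s)
    (Hg1 : ∀ s, HasDerivAt g1 (h1 s) s) (Hg2 : ∀ s, HasDerivAt g2 (h2 s) s)
    (cg1 : Continuous g1) (cg2 : Continuous g2)
    (ch1 : Continuous h1) (ch2 : Continuous h2)
    (pf1 : f1 S = f1 0) (pf2 : f2 S = f2 0)
    (pg1 : g1 S = g1 0) (pg2 : g2 S = g2 0)
    (ho : ∀ s, g1 s * h1 s + g2 s * h2 s = 0)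
    (hturn' : (∫ s in (0:ℝ)..S, (g1 s * h2 s - h1 s * g2 s)) = 2 * π) :
    (∫ s₁ in (0:ℝ)..S, ∫ s₂ in (0:ℝ)..S,
        ((h1 s₁ * f2 s₂ - f1 s₂ * h2 s₁) + (f1 s₁ * h2 s₂ - h1 s₂ * f2 s₁))
          * (g1 s₁ * g2 s₂ - g1 s₂ * g2 s₁))
      = -(4 * π) * ((1 / 2) * ∫ s in (0:ℝ)..S, (f1 s * g2 s - g1 s * f2 s)) := by
  have cf1 : Continuous f1 := Differentiable.continuous (fun s => (Hf1 s).differentiableAt)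
  have cf2 : Continuous f2 := Differentiable.continuous (fun s => (Hf2 s).differentiableAt)
  have ii : ∀ (u v : ℝ → ℝ), Continuous u → Continuous v →
      IntervalIntegrable (fun s => u s * v s) volume (0:ℝ) S :=
    fun u v hu hv => (hu.mul hv).intervalIntegrable 0 S
  have zint : ∀ (u u' : ℝ → ℝ), (∀ s, HasDerivAt u (u' s) s) → Continuous u' → u S = u 0 →
      (∫ s in (0:ℝ)..S, u' s) = 0 := by
    intro u u' hd hc hp
    rw [intervalIntegral.integral_eq_sub_of_hasDerivAt (fun x _ => hd x)
      (hc.intervalIntegrable 0 S), hp, sub_self]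
  have Z1 : (∫ s in (0:ℝ)..S, g1 s * f1 s) = 0 := by
    apply zint (fun s => f1 s * f1 s / 2) _ _ (cg1.mul cf1) (by simp only [pf1])
    intro s
    have h := ((Hf1 s).mul (Hf1 s)).div_const 2
    exact h.congr_deriv (by simp only [Pi.mul_apply]; ring)
  have Z2 : (∫ s in (0:ℝ)..S, g2 s * f2 s) = 0 := by
    apply zint (fun s => f2 s * f2 s / 2) _ _ (cg2.mul cf2) (by simp only [pf2])
    intro s
    have h := ((Hf2 s).mul (Hf2 s)).div_const 2
    exact h.congr_deriv (by simp only [Pi.mul_apply]; ring)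
  have Z3 : (∫ s in (0:ℝ)..S, g1 s * h1 s) = 0 := by
    apply zint (fun s => g1 s * g1 s / 2) _ _ (cg1.mul ch1) (by simp only [pg1])
    intro s
    have h := ((Hg1 s).mul (Hg1 s)).div_const 2
    exact h.congr_deriv (by simp only [Pi.mul_apply]; ring)
  have Z4 : (∫ s in (0:ℝ)..S, g2 s * h2 s) = 0 := by
    apply zint (fun s => g2 s * g2 s / 2) _ _ (cg2.mul ch2) (by simp only [pg2])
    intro s
    have h := ((Hg2 s).mul (Hg2 s)).div_const 2
    exact h.congr_deriv (by simp only [Pi.mul_apply]; ring)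
  set I12 : ℝ := ∫ s in (0:ℝ)..S, g1 s * f2 s with hI12
  set I21 : ℝ := ∫ s in (0:ℝ)..S, f1 s * g2 s with hI21
  set J12 : ℝ := ∫ s in (0:ℝ)..S, g1 s * h2 s with hJ12
  set J21 : ℝ := ∫ s in (0:ℝ)..S, h1 s * g2 s with hJ21
  have hJ0 : J12 + J21 = 0 := by
    have h0 : (∫ s in (0:ℝ)..S, (g1 s * h2 s + h1 s * g2 s)) = 0 := by
      apply zint (fun s => g1 s * g2 s) _ _ ((cg1.mul ch2).add (ch1.mul cg2))
        (by simp only [pg1, pg2])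
      intro s
      have h := (Hg1 s).mul (Hg2 s)
      exact h.congr_deriv (by simp only [Pi.mul_apply, Pi.add_apply]; ring)
    rw [intervalIntegral.integral_add (ii g1 h2 cg1 ch2) (ii h1 g2 ch1 cg2)] at h0
    rw [hJ12, hJ21]; exact h0
  have hJt : J12 - J21 = 2 * π := by
    rw [hJ12, hJ21, ← intervalIntegral.integral_sub (ii g1 h2 cg1 ch2) (ii h1 g2 ch1 cg2)]
    exact hturn'
  have hJ12v : J12 = π := by linarith
  have hJ21v : J21 = -π := by linarith
  have hsum : ∀ c₁ c₂ c₃ c₄ c₅ c₆ c₇ c₈ : ℝ,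
      (∫ s in (0:ℝ)..S, (c₁ * (g1 s * f1 s) + c₂ * (g1 s * f2 s) + c₃ * (f1 s * g2 s)
        + c₄ * (g2 s * f2 s) + c₅ * (g1 s * h1 s) + c₆ * (g1 s * h2 s)
        + c₇ * (h1 s * g2 s) + c₈ * (g2 s * h2 s)))
      = c₂ * I12 + c₃ * I21 + c₆ * J12 + c₇ * J21 := by
    intro c₁ c₂ c₃ c₄ c₅ c₆ c₇ c₈
    have iic : ∀ (c : ℝ) (u v : ℝ → ℝ), Continuous u → Continuous v →
        IntervalIntegrable (fun s => c * (u s * v s)) volume (0:ℝ) S :=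
      fun c u v hu hv => (continuous_const.mul (hu.mul hv)).intervalIntegrable 0 S
    have i1 := iic c₁ g1 f1 cg1 cf1
    have i2 := iic c₂ g1 f2 cg1 cf2
    have i3 := iic c₃ f1 g2 cf1 cg2
    have i4 := iic c₄ g2 f2 cg2 cf2
    have i5 := iic c₅ g1 h1 cg1 ch1
    have i6 := iic c₆ g1 h2 cg1 ch2
    have i7 := iic c₇ h1 g2 ch1 cg2
    have i8 := iic c₈ g2 h2 cg2 ch2
    rw [intervalIntegral.integral_add
        ((((((i1.add i2).add i3).add i4).add i5).add i6).add i7) i8,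
      intervalIntegral.integral_add (((((i1.add i2).add i3).add i4).add i5).add i6) i7,
      intervalIntegral.integral_add (((((i1.add i2).add i3).add i4).add i5)) i6,
      intervalIntegral.integral_add ((((i1.add i2).add i3).add i4)) i5,
      intervalIntegral.integral_add (((i1.add i2).add i3)) i4,
      intervalIntegral.integral_add ((i1.add i2)) i3,
      intervalIntegral.integral_add i1 i2]
    simp only [intervalIntegral.integral_const_mul]
    rw [Z1, Z2, Z3, Z4, ← hI12, ← hI21, ← hJ12, ← hJ21]
    ring
  have key : ∀ s₁ s₂ : ℝ,
      ((h1 s₁ * f2 s₂ - f1 s₂ * h2 s₁) + (f1 s₁ * h2 s₂ - h1 s₂ * f2 s₁))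
        * (g1 s₁ * g2 s₂ - g1 s₂ * g2 s₁)
      = (-(h1 s₁ * g1 s₁)) * (g1 s₂ * f1 s₂) + (-(h1 s₁ * g2 s₁)) * (g1 s₂ * f2 s₂)
        + (-(h2 s₁ * g1 s₁)) * (f1 s₂ * g2 s₂) + (-(h2 s₁ * g2 s₁)) * (g2 s₂ * f2 s₂)
        + (-(f1 s₁ * g1 s₁)) * (g1 s₂ * h1 s₂) + (-(f1 s₁ * g2 s₁)) * (g1 s₂ * h2 s₂)
        + (-(f2 s₁ * g1 s₁)) * (h1 s₂ * g2 s₂) + (-(f2 s₁ * g2 s₁)) * (g2 s₂ * h2 s₂) := by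
    intro s₁ s₂
    linear_combination (f1 s₂ * g1 s₂ + f2 s₂ * g2 s₂) * ho s₁
      + (f1 s₁ * g1 s₁ + f2 s₁ * g2 s₁) * ho s₂
  have inner_eq : ∀ s₁ : ℝ,
      (∫ s₂ in (0:ℝ)..S,
        ((h1 s₁ * f2 s₂ - f1 s₂ * h2 s₁) + (f1 s₁ * h2 s₂ - h1 s₂ * f2 s₁))
          * (g1 s₁ * g2 s₂ - g1 s₂ * g2 s₁))
      = (0:ℝ) * (g1 s₁ * f1 s₁) + (-J21) * (g1 s₁ * f2 s₁) + (-J12) * (f1 s₁ * g2 s₁)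
        + (0:ℝ) * (g2 s₁ * f2 s₁) + (0:ℝ) * (g1 s₁ * h1 s₁) + (-I21) * (g1 s₁ * h2 s₁)
        + (-I12) * (h1 s₁ * g2 s₁) + (0:ℝ) * (g2 s₁ * h2 s₁) := by
    intro s₁
    rw [intervalIntegral.integral_congr (fun s₂ _ => key s₁ s₂)]
    rw [hsum]
    ring
  rw [intervalIntegral.integral_congr (fun s₁ _ => inner_eq s₁)]
  rw [hsum]
  rw [intervalIntegral.integral_sub (ii f1 g2 cf1 cg2) (ii g1 f2 cg1 cf2), ← hI21, ← hI12]
  rw [hJ12v, hJ21v]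
  ring

/-- For an arc-length parametrization of a convex curve with total turning 2π,
∫∫ [L₁₁+L₂₂]·L₁₂ = -4π A(D). -/
theorem integral_L11_add_L22_mul_L12_arclength
    (S : ℝ) (hS : 0 < S) (γ : ℝ → ℝ × ℝ)
    (hsmooth : ContDiff ℝ (⊤ : ℕ∞) γ)
    (hper : ∀ s, γ (s + S) = γ s)
    (hunit : ∀ s, (deriv γ s).1 ^ 2 + (deriv γ s).2 ^ 2 = 1)
    (hcurv : ∀ s, 0 < om (deriv γ s) (deriv (deriv γ) s))
    (hconv : ∃ D : Set (ℝ × ℝ), Convex ℝ D ∧ IsCompact D ∧ frontier D = range γ)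
    (hturn : (∫ s in (0:ℝ)..S, om (deriv γ s) (deriv (deriv γ) s)) = 2 * π) :
    (∫ s₁ in (0:ℝ)..S, ∫ s₂ in (0:ℝ)..S,
        (L11 γ s₁ s₂ + L22 γ s₁ s₂) * L12 γ s₁ s₂)
      = -(4 * π) * ((1 / 2) * ∫ s in (0:ℝ)..S, om (γ s) (deriv γ s)) := by
  have hsm : ContDiff ℝ ((⊤:ℕ∞) : WithTop ℕ∞) γ := hsmooth.of_le (by simp)
  have hγd : Differentiable ℝ γ := hsm.differentiable (by simp)
  have hgcd : ContDiff ℝ ((⊤:ℕ∞) : WithTop ℕ∞) (deriv γ) := (contDiff_infty_iff_deriv.mp hsm).2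
  have hgd : Differentiable ℝ (deriv γ) := hgcd.differentiable (by simp)
  have hhc : Continuous (deriv (deriv γ)) := (contDiff_infty_iff_deriv.mp hgcd).2.continuous
  -- component derivatives
  have Hf1 : ∀ s, HasDerivAt (fun t => (γ t).1) ((deriv γ s).1) s := by
    intro s
    exact (ContinuousLinearMap.fst ℝ ℝ ℝ).hasFDerivAt.comp_hasDerivAt s (hγd s).hasDerivAt
  have Hf2 : ∀ s, HasDerivAt (fun t => (γ t).2) ((deriv γ s).2) s := by
    intro s
    exact (ContinuousLinearMap.snd ℝ ℝ ℝ).hasFDerivAt.comp_hasDerivAt s (hγd s).hasDerivAt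
  have Hg1 : ∀ s, HasDerivAt (fun t => (deriv γ t).1) ((deriv (deriv γ) s).1) s := by
    intro s
    exact (ContinuousLinearMap.fst ℝ ℝ ℝ).hasFDerivAt.comp_hasDerivAt s (hgd s).hasDerivAt
  have Hg2 : ∀ s, HasDerivAt (fun t => (deriv γ t).2) ((deriv (deriv γ) s).2) s := by
    intro s
    exact (ContinuousLinearMap.snd ℝ ℝ ℝ).hasFDerivAt.comp_hasDerivAt s (hgd s).hasDerivAt
  -- periodicity
  have hgper : deriv γ S = deriv γ 0 := by
    have h1 : (fun t => γ (t + S)) = γ := funext hper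
    have h2 : deriv γ (0 + S) = deriv (fun t => γ (t + S)) 0 := (deriv_comp_add_const γ S 0).symm
    rw [h1] at h2
    simpa using h2
  have hfS : γ S = γ 0 := by simpa using hper 0
  -- orthogonality
  have ho : ∀ s, (deriv γ s).1 * (deriv (deriv γ) s).1
      + (deriv γ s).2 * (deriv (deriv γ) s).2 = 0 := by
    intro s
    have hd : HasDerivAt (fun t => (deriv γ t).1 ^ 2 + (deriv γ t).2 ^ 2)
        (2 * ((deriv γ s).1 * (deriv (deriv γ) s).1 + (deriv γ s).2 * (deriv (deriv γ) s).2)) s := by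
      have h := ((Hg1 s).mul (Hg1 s)).add ((Hg2 s).mul (Hg2 s))
      have heq : (fun t => (deriv γ t).1 * (deriv γ t).1 + (deriv γ t).2 * (deriv γ t).2)
          = fun t => (deriv γ t).1 ^ 2 + (deriv γ t).2 ^ 2 := by
        funext t; ring
      rw [← heq]
      exact h.congr_deriv (by ring)
    have hconst : HasDerivAt (fun t => (deriv γ t).1 ^ 2 + (deriv γ t).2 ^ 2) 0 s := by
      have : (fun t => (deriv γ t).1 ^ 2 + (deriv γ t).2 ^ 2) = fun _ => (1:ℝ) := funext hunit
      rw [this]; exact hasDerivAt_const s 1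
    have := hd.unique hconst
    linarith
  have hturn' : (∫ s in (0:ℝ)..S,
      ((deriv γ s).1 * (deriv (deriv γ) s).2 - (deriv (deriv γ) s).1 * (deriv γ s).2)) = 2 * π := by
    simpa [om] using hturn
  have main := main_aux S (fun t => (γ t).1) (fun t => (γ t).2)
    (fun t => (deriv γ t).1) (fun t => (deriv γ t).2)
    (fun t => (deriv (deriv γ) t).1) (fun t => (deriv (deriv γ) t).2)
    Hf1 Hf2 Hg1 Hg2
    (hgcd.continuous.fst) (hgcd.continuous.snd) (hhc.fst) (hhc.snd)
    (by simp only [hfS]) (by simp only [hfS]) (by simp only [hgper]) (by simp only [hgper])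
    ho hturn'
  simpa [L11, L22, L12, om] using main
end
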